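/- arXiv:0706.0077 — 7 statements merged into one kernel-verified Lean document; each statement's English description precedes it below -/
import Mathlib

section
/- If V ∈ ℝ^N satisfies V_min ≤ V_i ≤ V_max for every i, then V_min ≤ F_i(V) ≤ V_max for every i; in other words, F maps the phase space M = [V_min, V_max]^N into itself. -/
open Finset Filter

attribute [local instance] Classical.propDecidable

noncomputable def Z (θ x : ℝ) : ℝ := if θ ≤ x then 1 else 0

noncomputable def F (N : ℕ) (W : Fin N → Fin N → ℝ) (Iext : Fin N → ℝ) (θ γ : ℝ)
    (V : Fin N → ℝ) : Fin N → ℝ :=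
  fun i => γ * V i * (1 - Z θ (V i)) + (∑ j, W i j * Z θ (V j)) + Iext i

noncomputable def Vmin (N : ℕ) (W : Fin N → Fin N → ℝ) (Iext : Fin N → ℝ) (γ : ℝ) : ℝ :=
  min 0 ((1 - γ)⁻¹ *
    ⨅ i : Fin N, ((∑ j ∈ Finset.univ.filter (fun j => W i j < 0), W i j) + Iext i))

noncomputable def Vmax (N : ℕ) (W : Fin N → Fin N → ℝ) (Iext : Fin N → ℝ) (γ : ℝ) : ℝ :=
  max 0 ((1 - γ)⁻¹ *
    ⨆ i : Fin N, ((∑ j ∈ Finset.univ.filter (fun j => 0 < W i j), W i j) + Iext i))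

lemma Z_nonneg (θ x : ℝ) : 0 ≤ Z θ x := by unfold Z; split <;> norm_num

lemma Z_le_one (θ x : ℝ) : Z θ x ≤ 1 := by unfold Z; split <;> norm_num

/-- `F` maps the phase space `M = [Vmin, Vmax]^N` into itself. -/
theorem stmt0 (N : ℕ) (hN : 0 < N) (W : Fin N → Fin N → ℝ) (Iext : Fin N → ℝ)
    (θ γ : ℝ) (hθ : 0 < θ) (hγ0 : 0 ≤ γ) (hγ1 : γ < 1)
    (V : Fin N → ℝ)
    (hV : ∀ i, Vmin N W Iext γ ≤ V i ∧ V i ≤ Vmax N W Iext γ) :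
    ∀ i, Vmin N W Iext γ ≤ F N W Iext θ γ V i ∧ F N W Iext θ γ V i ≤ Vmax N W Iext γ := by
  haveI : Nonempty (Fin N) := ⟨⟨0, hN⟩⟩
  intro i
  have hγ' : (0:ℝ) < 1 - γ := by linarith
  set m := Vmin N W Iext γ with hm
  set Mx := Vmax N W Iext γ with hMx
  have hm0 : m ≤ 0 := min_le_left _ _
  have hM0 : (0:ℝ) ≤ Mx := le_max_left _ _
  -- inf bound
  have hinf : (1 - γ) * m ≤
      (∑ j ∈ Finset.univ.filter (fun j => W i j < 0), W i j) + Iext i := by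
    have h1 : m ≤ (1 - γ)⁻¹ *
        ⨅ k : Fin N, ((∑ j ∈ Finset.univ.filter (fun j => W k j < 0), W k j) + Iext k) :=
      min_le_right _ _
    have h2 : (⨅ k : Fin N, ((∑ j ∈ Finset.univ.filter (fun j => W k j < 0), W k j) + Iext k))
        ≤ (∑ j ∈ Finset.univ.filter (fun j => W i j < 0), W i j) + Iext i :=
      ciInf_le (Set.Finite.bddBelow (Set.finite_range _)) i
    have h3 : (1 - γ) * m ≤ (1 - γ) * ((1 - γ)⁻¹ *
        ⨅ k : Fin N, ((∑ j ∈ Finset.univ.filter (fun j => W k j < 0), W k j) + Iext k)) :=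
      mul_le_mul_of_nonneg_left h1 hγ'.le
    rw [← mul_assoc, mul_inv_cancel₀ hγ'.ne', one_mul] at h3
    linarith
  -- sup bound
  have hsup : (∑ j ∈ Finset.univ.filter (fun j => 0 < W i j), W i j) + Iext i ≤
      (1 - γ) * Mx := by
    have h1 : (1 - γ)⁻¹ *
        (⨆ k : Fin N, ((∑ j ∈ Finset.univ.filter (fun j => 0 < W k j), W k j) + Iext k)) ≤ Mx :=
      le_max_right _ _
    have h2 : (∑ j ∈ Finset.univ.filter (fun j => 0 < W i j), W i j) + Iext i ≤
        ⨆ k : Fin N, ((∑ j ∈ Finset.univ.filter (fun j => 0 < W k j), W k j) + Iext k) :=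
      le_ciSup (f := fun k : Fin N =>
        (∑ j ∈ Finset.univ.filter (fun j => 0 < W k j), W k j) + Iext k)
        (Set.Finite.bddAbove (Set.finite_range _)) i
    have h3 : (1 - γ) * ((1 - γ)⁻¹ *
        (⨆ k : Fin N, ((∑ j ∈ Finset.univ.filter (fun j => 0 < W k j), W k j) + Iext k)))
        ≤ (1 - γ) * Mx := mul_le_mul_of_nonneg_left h1 hγ'.le
    rw [← mul_assoc, mul_inv_cancel₀ hγ'.ne', one_mul] at h3
    linarith
  -- sum bounds
  have hsum_le : (∑ j, W i j * Z θ (V j)) ≤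
      ∑ j ∈ Finset.univ.filter (fun j => 0 < W i j), W i j := by
    rw [Finset.sum_filter]
    apply Finset.sum_le_sum
    intro j _
    by_cases h : 0 < W i j
    · simp only [if_pos h]
      calc W i j * Z θ (V j) ≤ W i j * 1 :=
            mul_le_mul_of_nonneg_left (Z_le_one θ (V j)) h.le
        _ = W i j := mul_one _
    · simp only [if_neg h]
      exact mul_nonpos_of_nonpos_of_nonneg (not_lt.mp h) (Z_nonneg θ (V j))
  have hsum_ge : (∑ j ∈ Finset.univ.filter (fun j => W i j < 0), W i j) ≤
      ∑ j, W i j * Z θ (V j) := by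
    rw [Finset.sum_filter]
    apply Finset.sum_le_sum
    intro j _
    by_cases h : W i j < 0
    · simp only [if_pos h]
      calc W i j = W i j * 1 := (mul_one _).symm
        _ ≤ W i j * Z θ (V j) := mul_le_mul_of_nonpos_left (Z_le_one θ (V j)) h.le
    · simp only [if_neg h]
      exact mul_nonneg (not_lt.mp h) (Z_nonneg θ (V j))
  -- leak term bounds
  have hVi := hV i
  have hleak_lo : γ * m ≤ γ * V i * (1 - Z θ (V i)) := by
    unfold Z
    split
    · simp only [sub_self, mul_zero]
      exact mul_nonpos_of_nonneg_of_nonpos hγ0 hm0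
    · have : γ * m ≤ γ * V i := mul_le_mul_of_nonneg_left hVi.1 hγ0
      linarith
  have hleak_hi : γ * V i * (1 - Z θ (V i)) ≤ γ * Mx := by
    unfold Z
    split
    · simp only [sub_self, mul_zero]
      exact mul_nonneg hγ0 hM0
    · have : γ * V i ≤ γ * Mx := mul_le_mul_of_nonneg_left hVi.2 hγ0
      linarith
  have hsplit_m : γ * m + (1 - γ) * m = m := by ring
  have hsplit_M : γ * Mx + (1 - γ) * Mx = Mx := by ring
  constructor
  · show m ≤ γ * V i * (1 - Z θ (V i)) + (∑ j, W i j * Z θ (V j)) + Iext i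
    linarith
  · show γ * V i * (1 - Z θ (V i)) + (∑ j, W i j * Z θ (V j)) + Iext i ≤ Mx
    linarith
end

section
/- For every δ > 0, if V ∈ ℝ^N satisfies d(V, M) < δ (distance of V to the set M in the sup metric), then d(F(V), M) < δ; that is, F maps the open δ-neighborhood of M into itself. -/
open Finset Filter

attribute [local instance] Classical.propDecidable

/-- `F` maps the open `δ`-neighborhood of `M` (sup metric) into itself. -/
theorem stmt1 (N : ℕ) (hN : 0 < N) (W : Fin N → Fin N → ℝ) (Iext : Fin N → ℝ)
    (θ γ : ℝ) (hθ : 0 < θ) (hγ0 : 0 ≤ γ) (hγ1 : γ < 1)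
    (M : Set (Fin N → ℝ))
    (hM : M = Set.Icc (fun _ => Vmin N W Iext γ) (fun _ => Vmax N W Iext γ))
    (δ : ℝ) (hδ : 0 < δ) (V : Fin N → ℝ)
    (hV : Metric.infDist V M < δ) :
    Metric.infDist (F N W Iext θ γ V) M < δ := by
  haveI : Nonempty (Fin N) := ⟨⟨0, hN⟩⟩
  set a := Vmin N W Iext γ with ha
  set b := Vmax N W Iext γ with hb
  have ha0 : a ≤ 0 := min_le_left _ _
  have hb0 : 0 ≤ b := le_max_left _ _
  have hab : a ≤ b := ha0.trans hb0
  have h1γ : (0:ℝ) < 1 - γ := by linarith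
  -- key inequalities
  have hlow : ∀ i : Fin N, (1 - γ) * a ≤
      (∑ j ∈ Finset.univ.filter (fun j => W i j < 0), W i j) + Iext i := by
    intro i
    have h1 : a ≤ (1 - γ)⁻¹ *
        ⨅ i : Fin N, ((∑ j ∈ Finset.univ.filter (fun j => W i j < 0), W i j) + Iext i) :=
      min_le_right _ _
    have h2 : (⨅ i : Fin N, ((∑ j ∈ Finset.univ.filter (fun j => W i j < 0), W i j) + Iext i))
        ≤ (∑ j ∈ Finset.univ.filter (fun j => W i j < 0), W i j) + Iext i :=
      ciInf_le (Set.Finite.bddBelow (Set.finite_range _)) i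
    have h3 : (1 - γ) * a ≤ (1 - γ) * ((1 - γ)⁻¹ *
        ⨅ i : Fin N, ((∑ j ∈ Finset.univ.filter (fun j => W i j < 0), W i j) + Iext i)) :=
      mul_le_mul_of_nonneg_left h1 h1γ.le
    rw [← mul_assoc, mul_inv_cancel₀ h1γ.ne', one_mul] at h3
    linarith
  have hhigh : ∀ i : Fin N,
      (∑ j ∈ Finset.univ.filter (fun j => 0 < W i j), W i j) + Iext i ≤ (1 - γ) * b := by
    intro i
    have h1 : (1 - γ)⁻¹ *
        (⨆ i : Fin N, ((∑ j ∈ Finset.univ.filter (fun j => 0 < W i j), W i j) + Iext i)) ≤ b :=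
      le_max_right _ _
    have h2 : (∑ j ∈ Finset.univ.filter (fun j => 0 < W i j), W i j) + Iext i ≤
        ⨆ i : Fin N, ((∑ j ∈ Finset.univ.filter (fun j => 0 < W i j), W i j) + Iext i) :=
      le_ciSup (f := fun i : Fin N =>
        (∑ j ∈ Finset.univ.filter (fun j => 0 < W i j), W i j) + Iext i)
        (Set.Finite.bddAbove (Set.finite_range _)) i
    have h3 : (1 - γ) * ((1 - γ)⁻¹ *
        ⨆ i : Fin N, ((∑ j ∈ Finset.univ.filter (fun j => 0 < W i j), W i j) + Iext i))
        ≤ (1 - γ) * b :=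
      mul_le_mul_of_nonneg_left h1 h1γ.le
    rw [← mul_assoc, mul_inv_cancel₀ h1γ.ne', one_mul] at h3
    linarith
  -- M is nonempty
  have hMne : M.Nonempty := by
    refine ⟨fun _ => a, ?_⟩
    rw [hM]
    exact ⟨le_refl _, fun i => hab⟩
  obtain ⟨p, hpM, hpd⟩ := (Metric.infDist_lt_iff hMne).mp hV
  set ε := dist V p with hε
  have hε0 : 0 ≤ ε := dist_nonneg
  have hpi : ∀ i, a ≤ p i ∧ p i ≤ b := by
    rw [hM] at hpM
    exact fun i => ⟨hpM.1 i, hpM.2 i⟩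
  have hVi : ∀ i, a - ε ≤ V i ∧ V i ≤ b + ε := by
    intro i
    have := dist_le_pi_dist V p i
    rw [Real.dist_eq] at this
    have habs := abs_le.mp (this.trans (le_refl ε))
    have := hpi i
    constructor <;> linarith [habs.1, habs.2, (hpi i).1, (hpi i).2]
  -- bounds on F i
  have hsumlow : ∀ i, (∑ j ∈ Finset.univ.filter (fun j => W i j < 0), W i j) ≤
      ∑ j, W i j * Z θ (V j) := by
    intro i
    rw [Finset.sum_filter]
    apply Finset.sum_le_sum
    intro j _
    have hZ0 := Z_nonneg θ (V j)
    have hZ1 := Z_le_one θ (V j)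
    split_ifs with h
    · nlinarith
    · nlinarith [not_lt.mp h]
  have hsumhigh : ∀ i, (∑ j, W i j * Z θ (V j)) ≤
      ∑ j ∈ Finset.univ.filter (fun j => 0 < W i j), W i j := by
    intro i
    rw [Finset.sum_filter]
    apply Finset.sum_le_sum
    intro j _
    have hZ0 := Z_nonneg θ (V j)
    have hZ1 := Z_le_one θ (V j)
    split_ifs with h
    · nlinarith
    · nlinarith [not_lt.mp h]
  have hFbound : ∀ i, a - γ * ε ≤ F N W Iext θ γ V i ∧ F N W Iext θ γ V i ≤ b + γ * ε := by
    intro i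
    have hZ0 := Z_nonneg θ (V i)
    have hZ1 := Z_le_one θ (V i)
    have hVl := (hVi i).1
    have hVu := (hVi i).2
    have hsl := hsumlow i
    have hsh := hsumhigh i
    have hl := hlow i
    have hh := hhigh i
    unfold F
    constructor
    · have k1 : γ * (a - ε) * (1 - Z θ (V i)) ≤ γ * V i * (1 - Z θ (V i)) := by
        apply mul_le_mul_of_nonneg_right _ (by linarith)
        exact mul_le_mul_of_nonneg_left hVl hγ0
      have k2 : γ * (a - ε) ≤ γ * (a - ε) * (1 - Z θ (V i)) := by
        nlinarith [mul_nonneg (mul_nonneg hγ0 (by linarith : (0:ℝ) ≤ ε - a)) hZ0]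
      linarith
    · have k1 : γ * V i * (1 - Z θ (V i)) ≤ γ * (b + ε) * (1 - Z θ (V i)) := by
        apply mul_le_mul_of_nonneg_right _ (by linarith)
        exact mul_le_mul_of_nonneg_left hVu hγ0
      have k2 : γ * (b + ε) * (1 - Z θ (V i)) ≤ γ * (b + ε) := by
        nlinarith [mul_nonneg (mul_nonneg hγ0 (by linarith : (0:ℝ) ≤ b + ε)) hZ0]
      linarith
  -- clamp
  set q : Fin N → ℝ := fun i => max a (min b (F N W Iext θ γ V i)) with hq
  have hqM : q ∈ M := by
    rw [hM]
    constructor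
    · intro i; exact le_max_left _ _
    · intro i; exact max_le hab (min_le_left _ _)
  have hdist : dist (F N W Iext θ γ V) q ≤ γ * ε := by
    apply dist_pi_le_iff (by positivity) |>.mpr
    intro i
    rw [Real.dist_eq, abs_le]
    have h1 := (hFbound i).1
    have h2 := (hFbound i).2
    constructor
    · simp only [hq]
      have h4 : max a (min b (F N W Iext θ γ V i)) ≤ F N W Iext θ γ V i + γ * ε := by
        have hge : 0 ≤ γ * ε := mul_nonneg hγ0 hε0
        apply max_le
        · linarith
        · have := min_le_right b (F N W Iext θ γ V i)
          linarith
      linarith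
    · simp only [hq]
      have h5 : min b (F N W Iext θ γ V i) ≤ max a (min b (F N W Iext θ γ V i)) := le_max_right _ _
      have h3 : F N W Iext θ γ V i - γ * ε ≤ min b (F N W Iext θ γ V i) := by
        have hge : 0 ≤ γ * ε := mul_nonneg hγ0 hε0
        apply le_min <;> linarith
      linarith
  have hfin := Metric.infDist_le_dist_of_mem (x := F N W Iext θ γ V) hqM
  have hγε : γ * ε ≤ ε := by nlinarith [mul_nonneg hε0 (by linarith : (0:ℝ) ≤ 1 - γ)]
  linarith
end

section
/- Let ε > 0 and let V ∈ ℝ^N be such that |F^t(V)_i − θ| > ε for all t ≥ 0 and all i (the forward trajectory of V stays at distance more than ε from the singularity set). Then every V' ∈ ℝ^N with d(V, V') < ε satisfies, for all t ≥ 0: Z(F^t(V')_i) = Z(F^t(V)_i) for all i, and d(F^t(V'), F^t(V)) ≤ γ^t d(V, V'). In particular F^t(V') − F^t(V) → 0 as t → ∞, i.e., V has a local stable manifold of diameter ε. -/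
open Finset Filter

attribute [local instance] Classical.propDecidable

/-- if the forward trajectory of `V` stays at distance `> ε` from the
singularity set, then any `V'` with `d(V,V') < ε` has the same spiking sequence, is
exponentially attracted to the trajectory of `V`, and `F^t(V') − F^t(V) → 0`. -/
theorem stmt5 (N : ℕ) (hN : 0 < N) (W : Fin N → Fin N → ℝ) (Iext : Fin N → ℝ)
    (θ γ : ℝ) (hθ : 0 < θ) (hγ0 : 0 ≤ γ) (hγ1 : γ < 1)
    (ε : ℝ) (hε : 0 < ε) (V : Fin N → ℝ)
    (hsep : ∀ t : ℕ, ∀ i, ε < |(F N W Iext θ γ)^[t] V i - θ|)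
    (V' : Fin N → ℝ) (hV' : dist V V' < ε) :
    (∀ t : ℕ,
      (∀ i, Z θ ((F N W Iext θ γ)^[t] V' i) = Z θ ((F N W Iext θ γ)^[t] V i)) ∧
      dist ((F N W Iext θ γ)^[t] V') ((F N W Iext θ γ)^[t] V) ≤ γ ^ t * dist V V') ∧
    Tendsto (fun t : ℕ => (F N W Iext θ γ)^[t] V' - (F N W Iext θ γ)^[t] V)
      atTop (nhds 0) := by

  set f := F N W Iext θ γ with hf
  have hdVV' : dist V' V < ε := by rwa [dist_comm]
  -- Z equality from proximity
  have hZeq : ∀ (a b : ℝ), ε < |b - θ| → dist a b < ε → Z θ a = Z θ b := by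
    intro a b hsep hd
    rw [Real.dist_eq] at hd
    unfold Z
    rcases le_or_gt θ b with hb | hb
    · have h1 : ε < b - θ := by
        rwa [abs_of_nonneg (by linarith)] at hsep
      have : θ ≤ a := by
        have := abs_lt.1 hd
        linarith [this.1]
      simp [this, hb]
    · have h1 : ε < θ - b := by
        rwa [abs_of_neg (by linarith), neg_sub] at hsep
      have : ¬ θ ≤ a := by
        have := abs_lt.1 hd
        push_neg; linarith [this.2]
      simp [this, not_le.2 hb]
  -- contraction step
  have step : ∀ (A B : Fin N → ℝ), (∀ i, Z θ (A i) = Z θ (B i)) →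
      dist (f A) (f B) ≤ γ * dist A B := by
    intro A B hZ
    rw [dist_pi_le_iff (mul_nonneg hγ0 dist_nonneg)]
    intro i
    have hsum : (∑ j, W i j * Z θ (A j)) = ∑ j, W i j * Z θ (B j) := by
      exact Finset.sum_congr rfl fun j _ => by rw [hZ j]
    have hdiff : f A i - f B i = γ * (1 - Z θ (B i)) * (A i - B i) := by
      simp only [hf, F, hZ i, hsum]
      ring
    rw [Real.dist_eq, hdiff]
    have hZb : Z θ (B i) = 0 ∨ Z θ (B i) = 1 := by
      unfold Z; split <;> simp
    have h01 : 0 ≤ 1 - Z θ (B i) ∧ 1 - Z θ (B i) ≤ 1 := by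
      rcases hZb with h | h <;> rw [h] <;> norm_num
    have habs : |γ * (1 - Z θ (B i)) * (A i - B i)| =
        γ * (1 - Z θ (B i)) * |A i - B i| := by
      rw [abs_mul, abs_mul, abs_of_nonneg hγ0, abs_of_nonneg h01.1]
    rw [habs]
    have hle : |A i - B i| ≤ dist A B := by
      rw [← Real.dist_eq]; exact dist_le_pi_dist A B i
    calc γ * (1 - Z θ (B i)) * |A i - B i| ≤ γ * 1 * |A i - B i| := by
          apply mul_le_mul_of_nonneg_right _ (abs_nonneg _)
          exact mul_le_mul_of_nonneg_left h01.2 hγ0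
      _ = γ * |A i - B i| := by ring
      _ ≤ γ * dist A B := mul_le_mul_of_nonneg_left hle hγ0
  have key : ∀ t : ℕ, dist (f^[t] V') (f^[t] V) ≤ γ ^ t * dist V V' ∧
      (∀ i, Z θ (f^[t] V' i) = Z θ (f^[t] V i)) := by
    intro t
    induction t with
    | zero =>
      refine ⟨by simp [dist_comm], fun i => ?_⟩
      apply hZeq _ _ (hsep 0 i)
      calc dist (V' i) (V i) ≤ dist V' V := dist_le_pi_dist V' V i
        _ < ε := hdVV'
    | succ t ih =>
      have hlt : dist (f^[t] V') (f^[t] V) < ε := by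
        calc dist (f^[t] V') (f^[t] V) ≤ γ ^ t * dist V V' := ih.1
          _ ≤ 1 * dist V V' := by
              apply mul_le_mul_of_nonneg_right _ dist_nonneg
              exact pow_le_one₀ hγ0 hγ1.le
          _ = dist V V' := one_mul _
          _ < ε := hV'
      have hstep := step _ _ ih.2
      have hdist : dist (f^[t+1] V') (f^[t+1] V) ≤ γ ^ (t+1) * dist V V' := by
        rw [Function.iterate_succ_apply', Function.iterate_succ_apply']
        calc dist (f (f^[t] V')) (f (f^[t] V)) ≤ γ * dist (f^[t] V') (f^[t] V) := hstep
          _ ≤ γ * (γ ^ t * dist V V') := mul_le_mul_of_nonneg_left ih.1 hγ0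
          _ = γ ^ (t + 1) * dist V V' := by ring
      refine ⟨hdist, fun i => ?_⟩
      apply hZeq _ _ (hsep (t+1) i)
      calc dist (f^[t+1] V' i) (f^[t+1] V i) ≤ dist (f^[t+1] V') (f^[t+1] V) :=
            dist_le_pi_dist _ _ i
        _ ≤ γ ^ (t+1) * dist V V' := hdist
        _ ≤ 1 * dist V V' := by
            apply mul_le_mul_of_nonneg_right _ dist_nonneg
            exact pow_le_one₀ hγ0 hγ1.le
        _ = dist V V' := one_mul _
        _ < ε := hV'
  refine ⟨fun t => ⟨(key t).2, (key t).1⟩, ?_⟩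
  rw [tendsto_zero_iff_norm_tendsto_zero]
  have hlim : Tendsto (fun t : ℕ => γ ^ t * dist V V') atTop (nhds 0) := by
    simpa using (tendsto_pow_atTop_nhds_zero_of_lt_one hγ0 hγ1).mul_const (dist V V')
  exact squeeze_zero (fun t => norm_nonneg _)
    (fun t => by rw [← dist_eq_norm]; exact (key t).1) hlim
end

section
/- Let t ≥ 0 and let V, V' ∈ ℝ^N be such that Z(F^s(V)_i) = Z(F^s(V')_i) for all 0 ≤ s ≤ t and all i (the two trajectories have the same spiking sequence up to time t), and such that for every i there exists s ≤ t with Z(F^s(V)_i) = 1 (every neuron fires at least once by time t). Then F^{t+1}(V) = F^{t+1}(V'): the two trajectories collapse exactly after time t+1. -/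
open Finset Filter

attribute [local instance] Classical.propDecidable

/-- two trajectories with the same spiking sequence up to time `t`, in which
every neuron has fired at least once by time `t`, collapse exactly at time `t+1`. -/
theorem stmt7 (N : ℕ) (hN : 0 < N) (W : Fin N → Fin N → ℝ) (Iext : Fin N → ℝ)
    (θ γ : ℝ) (hθ : 0 < θ) (hγ0 : 0 ≤ γ) (hγ1 : γ < 1)
    (t : ℕ) (V V' : Fin N → ℝ)
    (hsame : ∀ s ≤ t, ∀ i, Z θ ((F N W Iext θ γ)^[s] V i) = Z θ ((F N W Iext θ γ)^[s] V' i))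
    (hfire : ∀ i, ∃ s ≤ t, Z θ ((F N W Iext θ γ)^[s] V i) = 1) :
    (F N W Iext θ γ)^[t + 1] V = (F N W Iext θ γ)^[t + 1] V' := by
  funext i
  obtain ⟨s, hs, hz⟩ := hfire i
  have key : ∀ k, s + 1 + k ≤ t + 1 →
      (F N W Iext θ γ)^[s + 1 + k] V i = (F N W Iext θ γ)^[s + 1 + k] V' i := by
    intro k
    induction k with
    | zero =>
      intro _
      rw [Function.iterate_succ_apply']
      rw [Function.iterate_succ_apply']
      simp only [F]
      have hz' : Z θ ((F N W Iext θ γ)^[s] V' i) = 1 := (hsame s hs i).symm.trans hz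
      rw [hz, hz']
      have : ∀ j, Z θ ((F N W Iext θ γ)^[s] V j) = Z θ ((F N W Iext θ γ)^[s] V' j) :=
        hsame s hs
      simp [this]
    | succ k ih =>
      intro hk
      have hk' : s + 1 + k ≤ t := by omega
      have ihv := ih (by omega)
      have : s + 1 + (k + 1) = (s + 1 + k) + 1 := by ring
      rw [this, Function.iterate_succ_apply', Function.iterate_succ_apply']
      simp only [F]
      have hZ : ∀ j, Z θ ((F N W Iext θ γ)^[s + 1 + k] V j)
          = Z θ ((F N W Iext θ γ)^[s + 1 + k] V' j) := hsame _ hk'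
      simp [ihv, hZ]
  have := key (t - s) (by omega)
  have h' : s + 1 + (t - s) = t + 1 := by omega
  rwa [h'] at this
end

section
/- Let T ≥ 0 and let V, V' ∈ ℝ^N be such that Z(F^s(V)_i) = Z(F^s(V')_i) for all 0 ≤ s < T and all i (the two points lie in the same element of the refined partition determined by the spiking itineraries of length T). Then d(F^T(V), F^T(V')) ≤ γ^T d(V, V'). -/
open Finset Filter

attribute [local instance] Classical.propDecidable

lemma step_lemma (N : ℕ) (W : Fin N → Fin N → ℝ) (Iext : Fin N → ℝ)
    (θ γ : ℝ) (hγ0 : 0 ≤ γ) (V V' : Fin N → ℝ)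
    (h : ∀ i, Z θ (V i) = Z θ (V' i)) :
    dist (F N W Iext θ γ V) (F N W Iext θ γ V') ≤ γ * dist V V' := by
  have hd : (0:ℝ) ≤ γ * dist V V' := mul_nonneg hγ0 dist_nonneg
  rw [dist_pi_le_iff hd]
  intro i
  have key : F N W Iext θ γ V i - F N W Iext θ γ V' i
      = γ * (1 - Z θ (V i)) * (V i - V' i) := by
    simp only [F]
    have hs : (∑ j, W i j * Z θ (V j)) = ∑ j, W i j * Z θ (V' j) := by
      refine Finset.sum_congr rfl fun j _ => by rw [h j]
    rw [hs, h i]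
    ring
  rw [Real.dist_eq, key, abs_mul]
  have hz : |γ * (1 - Z θ (V i))| ≤ γ := by
    rw [abs_mul, abs_of_nonneg hγ0]
    rcases le_or_gt θ (V i) with hc | hc
    · simp [Z, if_pos hc]; exact hγ0
    · simp [Z, not_le.mpr hc]
  calc |γ * (1 - Z θ (V i))| * |V i - V' i| ≤ γ * |V i - V' i| :=
        mul_le_mul_of_nonneg_right hz (abs_nonneg _)
    _ ≤ γ * dist V V' := by
        apply mul_le_mul_of_nonneg_left _ hγ0
        rw [← Real.dist_eq]
        exact dist_le_pi_dist V V' i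

/-- two points with the same spiking itinerary of length `T` satisfy
`d(F^T(V), F^T(V')) ≤ γ^T d(V, V')` (sup metric). -/
theorem stmt8 (N : ℕ) (hN : 0 < N) (W : Fin N → Fin N → ℝ) (Iext : Fin N → ℝ)
    (θ γ : ℝ) (hθ : 0 < θ) (hγ0 : 0 ≤ γ) (hγ1 : γ < 1)
    (T : ℕ) (V V' : Fin N → ℝ)
    (hsame : ∀ s < T, ∀ i,
      Z θ ((F N W Iext θ γ)^[s] V i) = Z θ ((F N W Iext θ γ)^[s] V' i)) :
    dist ((F N W Iext θ γ)^[T] V) ((F N W Iext θ γ)^[T] V') ≤ γ ^ T * dist V V' := by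
  induction T with
  | zero => simp
  | succ T ih =>
    have hIH := ih (fun s hs i => hsame s (Nat.lt_succ_of_lt hs) i)
    rw [Function.iterate_succ_apply', Function.iterate_succ_apply']
    calc dist (F N W Iext θ γ ((F N W Iext θ γ)^[T] V))
          (F N W Iext θ γ ((F N W Iext θ γ)^[T] V'))
        ≤ γ * dist ((F N W Iext θ γ)^[T] V) ((F N W Iext θ γ)^[T] V') :=
          step_lemma N W Iext θ γ hγ0 _ _ (hsame T (Nat.lt_succ_self T))
      _ ≤ γ * (γ ^ T * dist V V') := mul_le_mul_of_nonneg_left hIH hγ0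
      _ = γ ^ (T + 1) * dist V V' := by ring
end

section
/- Let V, V' : ℤ → ℝ^N be two global orbits (V(t+1) = F(V(t)) and V(t) ∈ M for all t ∈ ℤ, and likewise for V') with identical spiking sequences: Z(V_i(t)) = Z(V'_i(t)) for all i and all t ∈ ℤ. Then V(t) = V'(t) for all t ∈ ℤ; that is, the coding of global orbits by bi-infinite sequences of spiking patterns (raster plots) is one-to-one. -/
open Finset Filter

attribute [local instance] Classical.propDecidable

/-- two global orbits with the same bi-infinite spiking sequence (raster
plot) coincide: the symbolic coding of global orbits is one-to-one. -/
theorem stmt15 (N : ℕ) (hN : 0 < N) (W : Fin N → Fin N → ℝ) (Iext : Fin N → ℝ)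
    (θ γ : ℝ) (hθ : 0 < θ) (hγ0 : 0 ≤ γ) (hγ1 : γ < 1)
    (V V' : ℤ → Fin N → ℝ)
    (horb : ∀ t : ℤ, V (t + 1) = F N W Iext θ γ (V t))
    (horb' : ∀ t : ℤ, V' (t + 1) = F N W Iext θ γ (V' t))
    (hmem : ∀ t : ℤ, ∀ i, V t i ∈ Set.Icc (Vmin N W Iext γ) (Vmax N W Iext γ))
    (hmem' : ∀ t : ℤ, ∀ i, V' t i ∈ Set.Icc (Vmin N W Iext γ) (Vmax N W Iext γ))
    (hcode : ∀ t : ℤ, ∀ i, Z θ (V t i) = Z θ (V' t i)) :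
    ∀ t : ℤ, V t = V' t := by

  set C := Vmax N W Iext γ - Vmin N W Iext γ with hC
  -- one-step contraction
  have hstep : ∀ t : ℤ, ∀ i, |V (t + 1) i - V' (t + 1) i| ≤ γ * |V t i - V' t i| := by
    intro t i
    have h1 := congrFun (horb t) i
    have h2 := congrFun (horb' t) i
    have hz := hcode t i
    simp only [F] at h1 h2
    have hdiff : V (t + 1) i - V' (t + 1) i
        = γ * (1 - Z θ (V t i)) * (V t i - V' t i) := by
      have hs : (∑ j, W i j * Z θ (V t j)) = ∑ j, W i j * Z θ (V' t j) :=
        Finset.sum_congr rfl fun j _ => by rw [hcode t j]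
      rw [h1, h2, ← hz, hs]; ring
    rw [hdiff, abs_mul]
    have hz01 : Z θ (V t i) = 0 ∨ Z θ (V t i) = 1 := by
      unfold Z; split <;> simp
    have h01 : 0 ≤ 1 - Z θ (V t i) ∧ 1 - Z θ (V t i) ≤ 1 := by
      rcases hz01 with h | h <;> rw [h] <;> norm_num
    have : |γ * (1 - Z θ (V t i))| ≤ γ := by
      rw [abs_mul, abs_of_nonneg hγ0, abs_of_nonneg h01.1]
      nlinarith [h01.1, h01.2]
    exact mul_le_mul_of_nonneg_right this (abs_nonneg _)
  -- n-step contraction backwards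
  have hiter : ∀ n : ℕ, ∀ t : ℤ, ∀ i, |V t i - V' t i| ≤ γ ^ n * |V (t - n) i - V' (t - n) i| := by
    intro n
    induction n with
    | zero => intro t i; simp
    | succ n ih =>
      intro t i
      have h1 := hstep (t - (n + 1 : ℕ)) i
      have ht : (t - (n + 1 : ℕ) + 1 : ℤ) = t - n := by push_cast; ring
      rw [ht] at h1
      calc |V t i - V' t i| ≤ γ ^ n * |V (t - n) i - V' (t - n) i| := ih t i
        _ ≤ γ ^ n * (γ * |V (t - (n + 1 : ℕ)) i - V' (t - (n + 1 : ℕ)) i|) := by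
            exact mul_le_mul_of_nonneg_left h1 (pow_nonneg hγ0 n)
        _ = γ ^ (n + 1) * |V (t - (n + 1 : ℕ)) i - V' (t - (n + 1 : ℕ)) i| := by ring
  -- uniform bound
  have hbound : ∀ t : ℤ, ∀ i, |V t i - V' t i| ≤ C := by
    intro t i
    have h1 := hmem t i
    have h2 := hmem' t i
    simp only [Set.mem_Icc] at h1 h2
    rw [abs_sub_le_iff]
    constructor <;> [skip; skip] <;> simp only [hC] <;> linarith [h1.1, h1.2, h2.1, h2.2]
  intro t
  funext i
  have hle : ∀ n : ℕ, |V t i - V' t i| ≤ γ ^ n * C := fun n =>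
    le_trans (hiter n t i) (mul_le_mul_of_nonneg_left (hbound _ i) (pow_nonneg hγ0 n))
  have htend : Tendsto (fun n : ℕ => γ ^ n * C) atTop (nhds 0) := by
    simpa using (tendsto_pow_atTop_nhds_zero_of_lt_one hγ0 hγ1).mul_const C
  have : |V t i - V' t i| ≤ 0 := ge_of_tendsto' htend hle
  have := abs_nonneg (V t i - V' t i)
  have : |V t i - V' t i| = 0 := le_antisymm ‹_› ‹_›
  linarith [abs_eq_zero.mp this]
end

section
/- Define V_i^s = sup_{V ∈ M} limsup_{t→∞} F^t(V)_i and V^s = max_{i=1,…,N} V_i^s (the maximal asymptotic membrane potential). If V^s < θ, then: (a) V^s = max_i I_i^ext/(1−γ); (b) for every V ∈ M, F^t(V) converges to the fixed point V* with V*_i = I_i^ext/(1−γ); (c) Ω = {V*}; and (d) the distance of Ω to the singularity set equals θ − V^s, i.e., inf_{t ≥ 0} min_i |F^t(V*)_i − θ| = θ − V^s (neural death regime). -/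
/-!
Below threshold `F` is the affine contraction `V ↦ V* + γ (V - V*)`, and since `V* < θ` the
subthreshold region is forward invariant. The hypothesis `V^s < θ` makes every orbit of `M`
eventually subthreshold, hence geometrically convergent to `V*`; this gives (a), (b) and (d).

For (c) the time needed to fall silent is bounded uniformly on `M`: otherwise an ultrafilter
limit of the firing patterns of ever longer firing orbits is realised by a single orbit of `M`
that never falls silent. Firing resets a neuron, so once every neuron that ever fires has fired,
the potentials are determined by the pattern; neurons that never fire start at the lower corner
of `M` and stay below their counterparts. With a uniform time `T`, every point of
`F^(T+K)(M)` lies within `γ^K` times the diameter of `M` from `V*`.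
-/

open Finset Filter

attribute [local instance] Classical.propDecidable

open Topology

lemma exists_eq_on_prefixes {α : Type*} [Finite α] (f : ℕ → ℕ → α) :
    ∃ η : ℕ → α, ∀ H, ∃ n ≥ H, ∀ s ≤ H, f n s = η s := by
  let U := Ultrafilter.of (atTop : Filter ℕ)
  have hlim : ∀ s, ∃ a, ∀ᶠ n in (U : Filter ℕ), f n s = a := fun s => by
    obtain ⟨a, ha⟩ := (U.map (f · s)).eq_pure_of_finite
    exact ⟨a, Ultrafilter.mem_map.1 (ha ▸ Ultrafilter.mem_pure.2 rfl : {a} ∈ U.map (f · s))⟩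
  choose η hη using hlim
  refine ⟨η, fun H => ?_⟩
  have hge : ∀ᶠ n in (U : Filter ℕ), H ≤ n := Ultrafilter.of_le _ (eventually_ge_atTop H)
  have hagree : ∀ᶠ n in (U : Filter ℕ), ∀ s ∈ Set.Iic H, f n s = η s :=
    (eventually_all_finite (Set.finite_Iic H)).2 fun s _ => hη s
  exact (hge.and hagree).exists

lemma sum_filter_neg_le_sum {ι : Type*} [Fintype ι] (f : ι → ℝ) (s : Finset ι) :
    ∑ j ∈ univ.filter (fun j => f j < 0), f j ≤ ∑ j ∈ s, f j := by
  rw [sum_filter, ← univ_inter s, ← sum_ite_mem]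
  refine sum_le_sum fun j _ => ?_
  split_ifs <;> linarith

lemma sum_le_sum_filter_pos {ι : Type*} [Fintype ι] (f : ι → ℝ) (s : Finset ι) :
    ∑ j ∈ s, f j ≤ ∑ j ∈ univ.filter (fun j => 0 < f j), f j := by
  rw [sum_filter, ← univ_inter s, ← sum_ite_mem]
  refine sum_le_sum fun j _ => ?_
  split_ifs <;> linarith

section BoundedOrbits

variable {ι : Type*} {f : (ι → ℝ) → ι → ℝ} {a b V : ι → ℝ}

lemma isBoundedUnder_le_iterate_apply (hmaps : Set.MapsTo f (Set.Icc a b) (Set.Icc a b))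
    (hV : V ∈ Set.Icc a b) (i : ι) : IsBoundedUnder (· ≤ ·) atTop (fun t => f^[t] V i) :=
  isBoundedUnder_of ⟨b i, fun t => (hmaps.iterate t hV).2 i⟩

lemma limsup_iterate_apply_le (hmaps : Set.MapsTo f (Set.Icc a b) (Set.Icc a b))
    (hV : V ∈ Set.Icc a b) (i : ι) : limsup (fun t => f^[t] V i) atTop ≤ b i :=
  limsup_le_of_le (isBoundedUnder_of ⟨a i, fun t => (hmaps.iterate t hV).1 i⟩).isCoboundedUnder_le
    (Eventually.of_forall fun t => (hmaps.iterate t hV).2 i)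

lemma limsup_iterate_apply_le_sSup (hmaps : Set.MapsTo f (Set.Icc a b) (Set.Icc a b))
    (hV : V ∈ Set.Icc a b) (i : ι) :
    limsup (fun t => f^[t] V i) atTop ≤
      sSup ((fun V => limsup (fun t => f^[t] V i) atTop) '' Set.Icc a b) :=
  le_csSup ⟨b i, by rintro _ ⟨V, hV, rfl⟩; exact limsup_iterate_apply_le hmaps hV i⟩ ⟨V, hV, rfl⟩

end BoundedOrbits

noncomputable def firingSet {N : ℕ} (θ : ℝ) (V : Fin N → ℝ) : Finset (Fin N) :=
  univ.filter fun j => θ ≤ V j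

def Subthreshold {N : ℕ} (θ : ℝ) (V : Fin N → ℝ) : Prop := ∀ j, V j < θ

noncomputable def restingPotential {N : ℕ} (Iext : Fin N → ℝ) (γ : ℝ) : Fin N → ℝ :=
  fun i => Iext i / (1 - γ)

section Dynamics

variable {N : ℕ} {W : Fin N → Fin N → ℝ} {Iext : Fin N → ℝ} {θ γ : ℝ} {V V' : Fin N → ℝ}

@[simp] lemma mem_firingSet {i : Fin N} : i ∈ firingSet θ V ↔ θ ≤ V i := by
  simp [firingSet]

lemma firingSet_eq_empty_iff : firingSet θ V = ∅ ↔ Subthreshold θ V := by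
  simp [Finset.eq_empty_iff_forall_notMem, Subthreshold]

lemma F_apply (i : Fin N) :
    F N W Iext θ γ V i =
      (if i ∈ firingSet θ V then 0 else γ * V i) + (∑ j ∈ firingSet θ V, W i j + Iext i) := by
  simp only [F, Z, firingSet, sum_filter, mul_ite, mul_one, mul_zero, mem_filter, mem_univ,
    true_and]
  split_ifs <;> ring

lemma F_apply_of_subthreshold (hγ : γ ≠ 1) (hV : Subthreshold θ V) (i : Fin N) :
    F N W Iext θ γ V i = restingPotential Iext γ i + γ * (V i - restingPotential Iext γ i) := by
  have h1 : 1 - γ ≠ 0 := sub_ne_zero.2 hγ.symm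
  rw [F_apply, firingSet_eq_empty_iff.2 hV, if_neg (notMem_empty i), sum_empty, zero_add,
    restingPotential]
  field_simp
  ring

lemma subthreshold_F (hγ0 : 0 ≤ γ) (hγ1 : γ < 1) (hr : Subthreshold θ (restingPotential Iext γ))
    (hV : Subthreshold θ V) : Subthreshold θ (F N W Iext θ γ V) := fun i => by
  rw [F_apply_of_subthreshold hγ1.ne hV]
  nlinarith [mul_pos (sub_pos.2 hγ1) (sub_pos.2 (hr i)), mul_nonneg hγ0 (sub_pos.2 (hV i)).le]

lemma subthreshold_iterate_F (hγ0 : 0 ≤ γ) (hγ1 : γ < 1)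
    (hr : Subthreshold θ (restingPotential Iext γ)) (hV : Subthreshold θ V) (k : ℕ) :
    Subthreshold θ ((F N W Iext θ γ)^[k] V) :=
  Set.MapsTo.iterate (s := {V | Subthreshold θ V}) (fun _ hV => subthreshold_F hγ0 hγ1 hr hV) k hV

lemma iterate_F_apply_of_forall_subthreshold (hγ : γ ≠ 1)
    (h : ∀ k, Subthreshold θ ((F N W Iext θ γ)^[k] V)) (m : ℕ) (i : Fin N) :
    (F N W Iext θ γ)^[m] V i =
      restingPotential Iext γ i + γ ^ m * (V i - restingPotential Iext γ i) := by
  induction m with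
  | zero => simp
  | succ m ih =>
    rw [Function.iterate_succ_apply', F_apply_of_subthreshold hγ (h m), ih]
    ring

lemma tendsto_iterate_F_of_eventually_subthreshold (hγ0 : 0 ≤ γ) (hγ1 : γ < 1)
    (h : ∀ᶠ t in atTop, Subthreshold θ ((F N W Iext θ γ)^[t] V)) :
    Tendsto (fun t => (F N W Iext θ γ)^[t] V) atTop (𝓝 (restingPotential Iext γ)) := by
  obtain ⟨T, hT⟩ := eventually_atTop.1 h
  have hsub : ∀ k, Subthreshold θ ((F N W Iext θ γ)^[k] ((F N W Iext θ γ)^[T] V)) := fun k => by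
    rw [← Function.iterate_add_apply]
    exact hT _ (Nat.le_add_left T k)
  rw [← tendsto_add_atTop_iff_nat T]
  refine tendsto_pi_nhds.2 fun i => ?_
  simp_rw [Function.iterate_add_apply, iterate_F_apply_of_forall_subthreshold hγ1.ne hsub]
  simpa using ((tendsto_pow_atTop_nhds_zero_of_lt_one hγ0 hγ1).mul_const _).const_add
    (restingPotential Iext γ i)

lemma F_restingPotential (hγ : γ ≠ 1) (hr : Subthreshold θ (restingPotential Iext γ)) :
    F N W Iext θ γ (restingPotential Iext γ) = restingPotential Iext γ := by
  funext i
  rw [F_apply_of_subthreshold hγ hr]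
  ring

lemma iterate_F_apply_eq_of_firingSet_eq {i : Fin N} {s : ℕ}
    (hpat : ∀ r < s,
      firingSet θ ((F N W Iext θ γ)^[r] V) = firingSet θ ((F N W Iext θ γ)^[r] V'))
    (hfired : ∃ r < s, i ∈ firingSet θ ((F N W Iext θ γ)^[r] V)) :
    (F N W Iext θ γ)^[s] V i = (F N W Iext θ γ)^[s] V' i := by
  induction s with
  | zero => simp at hfired
  | succ s ih =>
    simp only [Function.iterate_succ_apply', F_apply, hpat s s.lt_succ_self]
    by_cases hi : i ∈ firingSet θ ((F N W Iext θ γ)^[s] V')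
    · simp [hi]
    · obtain ⟨r, hr, hir⟩ := hfired
      have hrs : r < s := lt_of_le_of_ne (Nat.lt_succ_iff.1 hr) <| by
        rintro rfl
        exact hi (hpat r hr ▸ hir)
      rw [ih (fun r hr => hpat r (hr.trans s.lt_succ_self)) ⟨r, hrs, hir⟩]

lemma iterate_F_comparison (hγ : 0 ≤ γ) {S : Set (Fin N)} {k : ℕ}
    (heq : ∀ i ∈ S, V i = V' i) (hle : ∀ i ∉ S, V i ≤ V' i)
    (hsub : ∀ r < k, ∀ i ∉ S, (F N W Iext θ γ)^[r] V' i < θ) :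
    (∀ i ∈ S, (F N W Iext θ γ)^[k] V i = (F N W Iext θ γ)^[k] V' i) ∧
      ∀ i ∉ S, (F N W Iext θ γ)^[k] V i ≤ (F N W Iext θ γ)^[k] V' i := by
  induction k with
  | zero => exact ⟨heq, hle⟩
  | succ k ih =>
    obtain ⟨ihS, ihSc⟩ := ih fun r hr => hsub r (hr.trans k.lt_succ_self)
    have hk := hsub k k.lt_succ_self
    have hpat : firingSet θ ((F N W Iext θ γ)^[k] V) =
        firingSet θ ((F N W Iext θ γ)^[k] V') := by
      ext i
      by_cases hi : i ∈ S
      · simp [ihS i hi]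
      · simp only [mem_firingSet]
        exact iff_of_false (not_le.2 ((ihSc i hi).trans_lt (hk i hi))) (not_le.2 (hk i hi))
    simp only [Function.iterate_succ_apply', F_apply, hpat]
    refine ⟨fun i hi => by rw [ihS i hi], fun i hi => ?_⟩
    have hnot : i ∉ firingSet θ ((F N W Iext θ γ)^[k] V') := by simpa using hk i hi
    simp only [if_neg hnot]
    gcongr
    exact ihSc i hi

lemma mul_Vmin_le (hγ : γ < 1) (S : Finset (Fin N)) (i : Fin N) :
    (1 - γ) * Vmin N W Iext γ ≤ ∑ j ∈ S, W i j + Iext i :=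
  calc (1 - γ) * Vmin N W Iext γ
      ≤ ⨅ i, (∑ j ∈ univ.filter (fun j => W i j < 0), W i j + Iext i) :=
        (le_inv_mul_iff₀ (sub_pos.2 hγ)).1 (min_le_right _ _)
    _ ≤ ∑ j ∈ univ.filter (fun j => W i j < 0), W i j + Iext i :=
        ciInf_le (Set.finite_range _).bddBelow i
    _ ≤ _ := add_le_add_left (sum_filter_neg_le_sum (W i) S) _

lemma le_mul_Vmax (hγ : γ < 1) (S : Finset (Fin N)) (i : Fin N) :
    ∑ j ∈ S, W i j + Iext i ≤ (1 - γ) * Vmax N W Iext γ :=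
  calc ∑ j ∈ S, W i j + Iext i
      ≤ ∑ j ∈ univ.filter (fun j => 0 < W i j), W i j + Iext i :=
        add_le_add_left (sum_le_sum_filter_pos (W i) S) _
    _ ≤ ⨆ i, (∑ j ∈ univ.filter (fun j => 0 < W i j), W i j + Iext i) :=
        le_ciSup (f := fun i => ∑ j ∈ univ.filter (fun j => 0 < W i j), W i j + Iext i)
          (Set.finite_range _).bddAbove i
    _ ≤ (1 - γ) * Vmax N W Iext γ := (inv_mul_le_iff₀ (sub_pos.2 hγ)).1 (le_max_right _ _)

lemma mapsTo_F_phaseBox (hγ0 : 0 ≤ γ) (hγ1 : γ < 1) :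
    Set.MapsTo (F N W Iext θ γ) (Set.Icc (fun _ => Vmin N W Iext γ) (fun _ => Vmax N W Iext γ))
      (Set.Icc (fun _ => Vmin N W Iext γ) (fun _ => Vmax N W Iext γ)) := by
  rintro V ⟨hlo, hhi⟩
  have hmin : Vmin N W Iext γ ≤ 0 := min_le_left _ _
  have hmax : 0 ≤ Vmax N W Iext γ := le_max_left _ _
  refine ⟨fun i => ?_, fun i => ?_⟩ <;> rw [F_apply]
  · have := mul_Vmin_le (W := W) (Iext := Iext) hγ1 (firingSet θ V) i
    have := mul_le_mul_of_nonneg_left (hlo i) hγ0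
    have := mul_nonpos_of_nonneg_of_nonpos hγ0 hmin
    split_ifs <;> linarith
  · have := le_mul_Vmax (W := W) (Iext := Iext) hγ1 (firingSet θ V) i
    have := mul_le_mul_of_nonneg_left (hhi i) hγ0
    have := mul_nonneg hγ0 hmax
    split_ifs <;> linarith

lemma restingPotential_mem_phaseBox (hγ : γ < 1) :
    restingPotential Iext γ ∈
      Set.Icc (fun _ => Vmin N W Iext γ) (fun _ => Vmax N W Iext γ) := by
  refine ⟨fun i => ?_, fun i => ?_⟩ <;> simp only [restingPotential]
  · rw [le_div_iff₀ (sub_pos.2 hγ), mul_comm]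
    simpa using mul_Vmin_le (W := W) hγ ∅ i
  · rw [div_le_iff₀ (sub_pos.2 hγ), mul_comm]
    simpa using le_mul_Vmax (W := W) hγ ∅ i

lemma exists_orbit_following_pattern (hγ : 0 ≤ γ) {a b : Fin N → ℝ}
    (hmaps : Set.MapsTo (F N W Iext θ γ) (Set.Icc a b) (Set.Icc a b))
    {η : ℕ → Finset (Fin N)} {V : ℕ → Fin N → ℝ} (hV : ∀ H, V H ∈ Set.Icc a b)
    (hη : ∀ H, ∀ s ≤ H, firingSet θ ((F N W Iext θ γ)^[s] (V H)) = η s) :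
    ∃ y ∈ Set.Icc a b, ∃ s₀, ∀ k, firingSet θ ((F N W Iext θ γ)^[k] y) = η (k + s₀) := by
  set A : Set (Fin N) := {i | ∃ s, i ∈ η s}
  obtain ⟨s₀, hs₀⟩ : ∃ s₀, ∀ i ∈ A, ∃ r < s₀, i ∈ η r := by
    have : ∀ i, ∀ᶠ s₀ in atTop, i ∈ A → ∃ r < s₀, i ∈ η r := fun i => by
      by_cases hi : i ∈ A
      · obtain ⟨r, hr⟩ := hi
        exact (eventually_gt_atTop r).mono fun s₀ hs₀ _ => ⟨r, hs₀, hr⟩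
      · exact Eventually.of_forall fun _ h => absurd h hi
    exact (eventually_all.2 this).exists
  have hbox : ∀ H t, (F N W Iext θ γ)^[t] (V H) ∈ Set.Icc a b := fun H t =>
    hmaps.iterate t (hV H)
  -- after time `s₀` the coordinates in `A` have fired, so they no longer depend on `H`
  have hA : ∀ H ≥ s₀, ∀ i ∈ A,
      (F N W Iext θ γ)^[s₀] (V s₀) i = (F N W Iext θ γ)^[s₀] (V H) i := fun H hH i hi =>
    iterate_F_apply_eq_of_firingSet_eq (fun r hr => by rw [hη s₀ r hr.le, hη H r (by omega)])
      (by obtain ⟨r, hr, hir⟩ := hs₀ i hi; exact ⟨r, hr, by rwa [hη s₀ r hr.le]⟩)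
  let y : Fin N → ℝ := fun i => if i ∈ A then (F N W Iext θ γ)^[s₀] (V s₀) i else a i
  refine ⟨y, ⟨fun i => ?_, fun i => ?_⟩, s₀, fun k => ?_⟩
  · by_cases hi : i ∈ A <;> simp [y, hi, (hbox s₀ s₀).1 i]
  · by_cases hi : i ∈ A
    · simp [y, hi, (hbox s₀ s₀).2 i]
    · simp [y, hi, ((hV 0).1 i).trans ((hV 0).2 i)]
  set U := (F N W Iext θ γ)^[s₀] (V (k + s₀))
  have hU : ∀ r ≤ k, firingSet θ ((F N W Iext θ γ)^[r] U) = η (r + s₀) := fun r hr => by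
    rw [← Function.iterate_add_apply]
    exact hη _ _ (by omega)
  have hUsub : ∀ r ≤ k, ∀ i ∉ A, (F N W Iext θ γ)^[r] U i < θ := fun r hr i hi =>
    not_le.1 fun h => hi ⟨r + s₀, hU r hr ▸ mem_firingSet.2 h⟩
  obtain ⟨hyA, hyAc⟩ := iterate_F_comparison (S := A) (V := y) (V' := U) hγ
    (fun i hi => by simp only [y, if_pos hi, U, hA (k + s₀) (by omega) i hi])
    (fun i hi => by simp only [y, if_neg hi, U]; exact (hbox _ s₀).1 i)
    (fun r hr => hUsub r hr.le)
  ext i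
  rw [← hU k le_rfl]
  by_cases hi : i ∈ A
  · simp only [mem_firingSet, hyA i hi]
  · simp only [mem_firingSet]
    exact iff_of_false (not_le.2 ((hyAc i hi).trans_lt (hUsub k le_rfl i hi)))
      (not_le.2 (hUsub k le_rfl i hi))

lemma exists_uniform_subthreshold_time (hγ : 0 ≤ γ) {a b : Fin N → ℝ}
    (hmaps : Set.MapsTo (F N W Iext θ γ) (Set.Icc a b) (Set.Icc a b))
    (h : ∀ V ∈ Set.Icc a b, ∃ t, Subthreshold θ ((F N W Iext θ γ)^[t] V)) :
    ∃ T, ∀ V ∈ Set.Icc a b, ∃ s ≤ T, Subthreshold θ ((F N W Iext θ γ)^[s] V) := by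
  by_contra! hlong
  choose V hV hfire using hlong
  obtain ⟨η, hη⟩ := exists_eq_on_prefixes fun n s => firingSet θ ((F N W Iext θ γ)^[s] (V n))
  choose w hw hwη using hη
  obtain ⟨y, hy, s₀, hys⟩ := exists_orbit_following_pattern hγ hmaps (fun H => hV (w H)) hwη
  obtain ⟨t, ht⟩ := h y hy
  have := hfire (w (t + s₀)) (t + s₀) (hw _)
  rw [← firingSet_eq_empty_iff, hwη _ _ le_rfl, ← hys, firingSet_eq_empty_iff] at this
  exact this ht

lemma eq_restingPotential_of_mem_iInter_image_iterate (hγ0 : 0 ≤ γ) (hγ1 : γ < 1)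
    {a b : Fin N → ℝ} (hmaps : Set.MapsTo (F N W Iext θ γ) (Set.Icc a b) (Set.Icc a b))
    (hr : restingPotential Iext γ ∈ Set.Icc a b) (hrθ : Subthreshold θ (restingPotential Iext γ))
    {T : ℕ} (hT : ∀ V ∈ Set.Icc a b, ∃ s ≤ T, Subthreshold θ ((F N W Iext θ γ)^[s] V))
    {x : Fin N → ℝ} (hx : x ∈ ⋂ t : ℕ, (F N W Iext θ γ)^[t] '' Set.Icc a b) :
    x = restingPotential Iext γ := by
  funext i
  set r := restingPotential Iext γ
  have hbound : ∀ K : ℕ, |x i - r i| ≤ γ ^ K * (b i - a i) := fun K => by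
    obtain ⟨V, hV, rfl⟩ := Set.mem_iInter.1 hx (K + T)
    obtain ⟨s, hsT, hs⟩ := hT V hV
    have hU := hmaps.iterate s hV
    have hdist : |(F N W Iext θ γ)^[s] V i - r i| ≤ b i - a i :=
      abs_sub_le_iff.2 ⟨by linarith [hU.2 i, hr.1 i], by linarith [hU.1 i, hr.2 i]⟩
    rw [show K + T = (K + T - s) + s by omega, Function.iterate_add_apply,
      iterate_F_apply_of_forall_subthreshold hγ1.ne (subthreshold_iterate_F hγ0 hγ1 hrθ hs),
      add_sub_cancel_left, abs_mul, abs_pow, abs_of_nonneg hγ0]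
    exact mul_le_mul (pow_le_pow_of_le_one hγ0 hγ1.le (by omega)) hdist (abs_nonneg _)
      (pow_nonneg hγ0 _)
  have hlim : Tendsto (fun K : ℕ => γ ^ K * (b i - a i)) atTop (𝓝 0) := by
    simpa using (tendsto_pow_atTop_nhds_zero_of_lt_one hγ0 hγ1).mul_const (b i - a i)
  exact sub_eq_zero.1 (abs_nonpos_iff.1 (ge_of_tendsto' hlim hbound))

end Dynamics

theorem stmt19_general (N : ℕ) (hN : 0 < N) (W : Fin N → Fin N → ℝ) (Iext : Fin N → ℝ)
    (θ γ : ℝ) (hγ0 : 0 ≤ γ) (hγ1 : γ < 1)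
    (M : Set (Fin N → ℝ))
    (hM : M = Set.Icc (fun _ => Vmin N W Iext γ) (fun _ => Vmax N W Iext γ))
    (Ω : Set (Fin N → ℝ)) (hΩ : Ω = ⋂ t : ℕ, (F N W Iext θ γ)^[t] '' M)
    (Vsi : Fin N → ℝ)
    (hVsi : ∀ i, Vsi i =
      sSup ((fun V => limsup (fun t : ℕ => (F N W Iext θ γ)^[t] V i) atTop) '' M))
    (Vs : ℝ) (hVs : Vs = ⨆ i, Vsi i)
    (hVsθ : Vs < θ)
    (Vstar : Fin N → ℝ) (hVstar : Vstar = fun i => Iext i / (1 - γ)) :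
    Vs = (⨆ i, Iext i / (1 - γ)) ∧
    (∀ V ∈ M, Tendsto (fun t : ℕ => (F N W Iext θ γ)^[t] V) atTop (nhds Vstar)) ∧
    Ω = {Vstar} ∧
    (⨅ (t : ℕ) (i : Fin N), |(F N W Iext θ γ)^[t] Vstar i - θ|) = θ - Vs := by
  have : Nonempty (Fin N) := ⟨⟨0, hN⟩⟩
  replace hVstar : Vstar = restingPotential Iext γ := hVstar
  subst hM hΩ hVstar
  have hmaps := mapsTo_F_phaseBox (W := W) (Iext := Iext) (θ := θ) hγ0 hγ1
  have hr := restingPotential_mem_phaseBox (W := W) (Iext := Iext) hγ1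
  have hdeath : ∀ V ∈ Set.Icc (fun _ => Vmin N W Iext γ) (fun _ => Vmax N W Iext γ),
      ∀ᶠ t in atTop, Subthreshold θ ((F N W Iext θ γ)^[t] V) := fun V hV =>
    eventually_all.2 fun i => eventually_lt_of_limsup_lt
      (calc _ ≤ Vsi i := hVsi i ▸ limsup_iterate_apply_le_sSup hmaps hV i
        _ ≤ Vs := hVs ▸ le_ciSup (Set.finite_range Vsi).bddAbove i
        _ < θ := hVsθ)
      (isBoundedUnder_le_iterate_apply hmaps hV i)
  have hconv := fun V hV => tendsto_iterate_F_of_eventually_subthreshold hγ0 hγ1 (hdeath V hV)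
  have hVs_eq : Vs = ⨆ i, restingPotential Iext γ i := hVs.trans <| iSup_congr fun i => by
    rw [hVsi i, Set.EqOn.image_eq (f₂ := fun _ => restingPotential Iext γ i)
      fun V hV => (tendsto_pi_nhds.1 (hconv V hV) i).limsup_eq,
      Set.Nonempty.image_const ⟨_, hr⟩, csSup_singleton]
  have hrθ : Subthreshold θ (restingPotential Iext γ) := fun i =>
    (le_ciSup (Set.finite_range _).bddAbove i).trans_lt (hVs_eq ▸ hVsθ)
  have hfix := F_restingPotential (W := W) hγ1.ne hrθ
  refine ⟨hVs_eq, hconv, ?_, ?_⟩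
  · obtain ⟨T, hT⟩ := exists_uniform_subthreshold_time hγ0 hmaps fun V hV => (hdeath V hV).exists
    refine Set.Subset.antisymm (fun x hx => eq_restingPotential_of_mem_iInter_image_iterate
      hγ0 hγ1 hmaps hr hrθ hT hx) ?_
    rintro _ rfl
    exact Set.mem_iInter.2 fun t => ⟨_, hr, Function.iterate_fixed hfix t⟩
  · have habs : ∀ i, |restingPotential Iext γ i - θ| = θ - restingPotential Iext γ i := fun i => by
      rw [abs_sub_comm, abs_of_pos (sub_pos.2 (hrθ i))]
    simp only [Function.iterate_fixed hfix, ciInf_const, habs, hVs_eq]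
    exact (Antitone.map_ciSup_of_continuousAt (continuous_sub_left θ).continuousAt
      (fun _ _ h => sub_le_sub_left h θ) (Set.finite_range _).bddAbove).symm

/-- neural death regime: if the maximal asymptotic membrane potential
`V^s = max_i sup_{V ∈ M} limsup_t F^t(V)_i` is below `θ`, then `V^s = max_i I_i^ext/(1−γ)`,
every trajectory converges to the fixed point `V*` with `V*_i = I_i^ext/(1−γ)`,
`Ω = {V*}`, and the distance of `Ω` to the singularity set equals `θ − V^s`. -/
theorem stmt19 (N : ℕ) (hN : 0 < N) (W : Fin N → Fin N → ℝ) (Iext : Fin N → ℝ)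
    (θ γ : ℝ) (hθ : 0 < θ) (hγ0 : 0 ≤ γ) (hγ1 : γ < 1)
    (M : Set (Fin N → ℝ))
    (hM : M = Set.Icc (fun _ => Vmin N W Iext γ) (fun _ => Vmax N W Iext γ))
    (Ω : Set (Fin N → ℝ)) (hΩ : Ω = ⋂ t : ℕ, (F N W Iext θ γ)^[t] '' M)
    (Vsi : Fin N → ℝ)
    (hVsi : ∀ i, Vsi i =
      sSup ((fun V => limsup (fun t : ℕ => (F N W Iext θ γ)^[t] V i) atTop) '' M))
    (Vs : ℝ) (hVs : Vs = ⨆ i, Vsi i)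
    (hVsθ : Vs < θ)
    (Vstar : Fin N → ℝ) (hVstar : Vstar = fun i => Iext i / (1 - γ)) :
    Vs = (⨆ i, Iext i / (1 - γ)) ∧
    (∀ V ∈ M, Tendsto (fun t : ℕ => (F N W Iext θ γ)^[t] V) atTop (nhds Vstar)) ∧
    Ω = {Vstar} ∧
    (⨅ (t : ℕ) (i : Fin N), |(F N W Iext θ γ)^[t] Vstar i - θ|) = θ - Vs :=
  stmt19_general N hN W Iext θ γ hγ0 hγ1 M hM Ω hΩ Vsi hVsi Vs hVs hVsθ Vstar hVstar
end
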